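/- arXiv:1302.4116 — 5 statements merged into one kernel-verified Lean document; each statement's English description precedes it below -/
import Mathlib

section
/- Let φ : 𝔻 → 𝔻 be holomorphic and T = C_φ the composition operator on ℓ². Let z_1, …, z_n be distinct points of 𝔻 such that φ(z_1), …, φ(z_n) are also distinct. Suppose K > 0 satisfies ∑_{j=1}^n (1 − |z_j|²)|f_a(z_j)|² ≤ K·‖a‖²_{ℓ²} for every a ∈ ℓ², and suppose M > 0 is such that for every (w_1,…,w_n) ∈ ℂⁿ there exists a ∈ ℓ² with f_a(φ(z_j)) = w_j for all j and ‖a‖²_{ℓ²} ≤ M²·∑_{j=1}^n |w_j|²(1 − |φ(z_j)|²). Then a_n(T) ≥ M^{−1}·K^{−1/2}·min_{1 ≤ j ≤ n} ((1 − |z_j|²)/(1 − |φ(z_j)|²))^{1/2}. -/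
/-
On the n-dimensional space V = (ker L)ᗮ, where L a = (f_a(φ(z_j)))_j is onto ℂⁿ by the
interpolation hypothesis, every x has minimal norm among the solutions of L a = L x, so
‖x‖² ≤ M² ∑ |f_x(φ(z_j))|² (1 - |φ(z_j)|²). Since f_x(φ(z_j)) = f_{Tx}(z_j), the Carleson bound
turns this into μ‖x‖² ≤ M²K‖Tx‖², with μ the minimum of the ratios. Thus T is bounded below
by M⁻¹K^{-1/2}μ^{1/2} on V, and an operator of rank < n vanishes at some nonzero point of V.
-/

open Complex MeasureTheory Filter Set

noncomputable section

abbrev H2 : Type := lp (fun _ : ℕ => ℂ) 2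

noncomputable def fa (a : H2) (z : ℂ) : ℂ := ∑' k : ℕ, a k * z ^ k

noncomputable def approxNum (T : H2 →L[ℂ] H2) (n : ℕ) : ℝ :=
  sInf {c : ℝ | ∃ R : H2 →L[ℂ] H2,
    FiniteDimensional ℂ (LinearMap.range R.toLinearMap) ∧
    Module.finrank ℂ (LinearMap.range R.toLinearMap) ≤ n - 1 ∧ c = ‖T - R‖}

open Module

section HilbertSpace

variable {𝕜 E : Type*} [RCLike 𝕜] [NormedAddCommGroup E] [InnerProductSpace 𝕜 E]

theorem norm_le_of_mem_orthogonal_ker {F : Type*} [AddCommGroup F] [Module 𝕜 F]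
    {L : E →ₗ[𝕜] F} {x a : E} (hx : x ∈ (LinearMap.ker L)ᗮ) (hax : L a = L x) : ‖x‖ ≤ ‖a‖ := by
  have hsub : a - x ∈ LinearMap.ker L := by rw [LinearMap.mem_ker, map_sub, hax, sub_self]
  have hpyth := norm_add_sq_eq_norm_sq_add_norm_sq_of_inner_eq_zero (a - x) x
    ((Submodule.mem_orthogonal _ x).mp hx _ hsub)
  rw [sub_add_cancel] at hpyth
  nlinarith [sq_nonneg ‖a - x‖, norm_nonneg x, norm_nonneg a]

theorem finrank_orthogonal_ker_of_surjective [CompleteSpace E] {F : Type*} [TopologicalSpace F]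
    [AddCommGroup F] [Module 𝕜 F] [T1Space F] (L : E →L[𝕜] F) (hL : Function.Surjective L) :
    finrank 𝕜 (LinearMap.ker L.toLinearMap)ᗮ = finrank 𝕜 F := by
  have : CompleteSpace (LinearMap.ker L.toLinearMap) := L.isClosed_ker.completeSpace_coe
  exact ((LinearMap.ker L.toLinearMap).quotientEquivOrthogonal.toLinearEquiv.symm.trans
    (L.toLinearMap.quotKerEquivOfSurjective hL)).finrank_eq

end HilbertSpace

theorem le_norm_sub_of_finrank_range_lt {𝕜 E F : Type*} [NontriviallyNormedField 𝕜]
    [NormedAddCommGroup E] [NormedSpace 𝕜 E] [NormedAddCommGroup F] [NormedSpace 𝕜 F]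
    (T R : E →L[𝕜] F) (V : Submodule 𝕜 E) [FiniteDimensional 𝕜 (LinearMap.range R.toLinearMap)]
    (hR : finrank 𝕜 (LinearMap.range R.toLinearMap) < finrank 𝕜 V) {c : ℝ}
    (hc : ∀ x ∈ V, c * ‖x‖ ≤ ‖T x‖) : c ≤ ‖T - R‖ := by
  have : FiniteDimensional 𝕜 V := finite_of_finrank_pos (hR.trans_le' (Nat.zero_le _))
  obtain ⟨⟨x, hxV⟩, hx, hx0⟩ := Submodule.exists_mem_ne_zero_of_ne_bot
    (LinearMap.ker_ne_bot_of_finrank_lt (f := R.toLinearMap.rangeRestrict ∘ₗ V.subtype) hR)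
  have hRx : R x = 0 := by simpa [Subtype.ext_iff] using hx
  have hxpos : 0 < ‖x‖ := norm_pos_iff.mpr fun h => hx0 (Subtype.ext h)
  refine le_of_mul_le_mul_right ?_ hxpos
  calc c * ‖x‖ ≤ ‖T x‖ := hc x hxV
    _ = ‖(T - R) x‖ := by rw [sub_apply, hRx, sub_zero]
    _ ≤ ‖T - R‖ * ‖x‖ := (T - R).le_opNorm x

theorem le_approxNum (T : H2 →L[ℂ] H2) {n : ℕ} (hn : 1 ≤ n) (V : Submodule ℂ H2)
    (hV : finrank ℂ V = n) {c : ℝ} (hc : ∀ x ∈ V, c * ‖x‖ ≤ ‖T x‖) : c ≤ approxNum T n := by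
  refine le_csInf ⟨_, 0, ?_, ?_, rfl⟩ ?_
  · rw [ContinuousLinearMap.toLinearMap_zero, LinearMap.range_zero]
    infer_instance
  · rw [ContinuousLinearMap.toLinearMap_zero, LinearMap.range_zero, finrank_bot]
    exact Nat.zero_le _
  · rintro _ ⟨R, hRfin, hRrank, rfl⟩
    exact le_norm_sub_of_finrank_range_lt T R V (by omega) hc

section Evaluation

theorem norm_mul_pow_le (a : H2) (ζ : ℂ) (k : ℕ) : ‖a k * ζ ^ k‖ ≤ ‖a‖ * ‖ζ‖ ^ k := by
  rw [norm_mul, norm_pow]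
  exact mul_le_mul_of_nonneg_right (lp.norm_apply_le_norm two_ne_zero a k) (by positivity)

variable {ζ : ℂ} (hζ : ‖ζ‖ < 1)
include hζ

theorem summable_fa (a : H2) : Summable fun k => a k * ζ ^ k :=
  Summable.of_norm_bounded ((summable_geometric_of_lt_one (norm_nonneg ζ) hζ).mul_left ‖a‖)
    (norm_mul_pow_le a ζ)

theorem norm_fa_le (a : H2) : ‖fa a ζ‖ ≤ (1 - ‖ζ‖)⁻¹ * ‖a‖ := by
  rw [mul_comm]
  exact tsum_of_norm_bounded ((hasSum_geometric_of_lt_one (norm_nonneg ζ) hζ).mul_left ‖a‖)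
    (norm_mul_pow_le a ζ)

noncomputable def evalCLM : H2 →L[ℂ] ℂ :=
  LinearMap.mkContinuous
    { toFun := fun a => fa a ζ
      map_add' := fun a b => by
        simp only [fa, lp.coeFn_add, Pi.add_apply, add_mul]
        exact (summable_fa hζ a).tsum_add (summable_fa hζ b)
      map_smul' := fun c a => by
        simp only [fa, lp.coeFn_smul, Pi.smul_apply, smul_eq_mul, mul_assoc, RingHom.id_apply]
        exact tsum_mul_left }
    (1 - ‖ζ‖)⁻¹ (norm_fa_le hζ)

end Evaluation

theorem inv_mul_inv_sqrt_mul_sqrt_mul_le {M K μ s t : ℝ} (hM : 0 < M) (hK : 0 < K) (hμ : 0 ≤ μ)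
    (hs : 0 ≤ s) (ht : 0 ≤ t) (h : μ * s ^ 2 ≤ M ^ 2 * K * t ^ 2) :
    M⁻¹ * (Real.sqrt K)⁻¹ * Real.sqrt μ * s ≤ t := by
  refine (pow_le_pow_iff_left₀ (by positivity) ht two_ne_zero).mp ?_
  rw [mul_pow, mul_pow, mul_pow, inv_pow, inv_pow, Real.sq_sqrt hK.le, Real.sq_sqrt hμ]
  field_simp
  linarith

theorem stmt5_general (φ : ℂ → ℂ)
    (hφ_maps : Set.MapsTo φ (Metric.ball 0 1) (Metric.ball 0 1))
    (T : H2 →L[ℂ] H2)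
    (hT : ∀ (a : H2) (z : ℂ), ‖z‖ < 1 → fa (T a) z = fa a (φ z))
    (n : ℕ) (hn : 1 ≤ n)
    (z : Fin n → ℂ) (hz : ∀ j, ‖z j‖ < 1)
    (K : ℝ) (hK : 0 < K)
    (hCarleson : ∀ a : H2,
      ∑ j : Fin n, (1 - ‖z j‖ ^ 2) * ‖fa a (z j)‖ ^ 2 ≤ K * ‖a‖ ^ 2)
    (M : ℝ) (hM : 0 < M)
    (hInterp : ∀ w : Fin n → ℂ, ∃ a : H2,
      (∀ j, fa a (φ (z j)) = w j) ∧
      ‖a‖ ^ 2 ≤ M ^ 2 * ∑ j : Fin n, ‖w j‖ ^ 2 * (1 - ‖φ (z j)‖ ^ 2)) :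
    approxNum T n ≥
      M⁻¹ * (Real.sqrt K)⁻¹ *
        Real.sqrt (⨅ j : Fin n, (1 - ‖z j‖ ^ 2) / (1 - ‖φ (z j)‖ ^ 2)) := by
  have hφz (j) : ‖φ (z j)‖ < 1 := by
    simpa using hφ_maps (show z j ∈ Metric.ball 0 1 by simpa using hz j)
  have hφz_sq (j) : 0 < 1 - ‖φ (z j)‖ ^ 2 := by nlinarith [hφz j, norm_nonneg (φ (z j))]
  set μ := ⨅ j : Fin n, (1 - ‖z j‖ ^ 2) / (1 - ‖φ (z j)‖ ^ 2)
  have hμ : 0 ≤ μ := Real.iInf_nonneg fun j =>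
    div_nonneg (by nlinarith [hz j, norm_nonneg (z j)]) (hφz_sq j).le
  have hμ_le (j) : μ * (1 - ‖φ (z j)‖ ^ 2) ≤ 1 - ‖z j‖ ^ 2 :=
    (le_div_iff₀ (hφz_sq j)).mp (ciInf_le (Set.finite_range _).bddBelow j)
  let L := ContinuousLinearMap.pi fun j => evalCLM (hφz j)
  have hL : Function.Surjective L := fun w => (hInterp w).imp fun a ha => funext ha.1
  refine le_approxNum T hn (LinearMap.ker L.toLinearMap)ᗮ (by
    rw [finrank_orthogonal_ker_of_surjective L hL, finrank_fin_fun]) fun x hx => ?_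
  refine inv_mul_inv_sqrt_mul_sqrt_mul_le hM hK hμ (norm_nonneg x) (norm_nonneg (T x)) ?_
  obtain ⟨a, ha, ha_norm⟩ := hInterp (L x)
  calc μ * ‖x‖ ^ 2 ≤ μ * (M ^ 2 * ∑ j, ‖L x j‖ ^ 2 * (1 - ‖φ (z j)‖ ^ 2)) := by
        gcongr
        exact (pow_le_pow_left₀ (norm_nonneg x)
          (norm_le_of_mem_orthogonal_ker hx (funext ha)) 2).trans ha_norm
    _ ≤ M ^ 2 * ∑ j, (1 - ‖z j‖ ^ 2) * ‖fa (T x) (z j)‖ ^ 2 := by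
        rw [mul_left_comm, Finset.mul_sum]
        refine mul_le_mul_of_nonneg_left (Finset.sum_le_sum fun j _ => ?_) (by positivity)
        change μ * (‖fa x (φ (z j))‖ ^ 2 * _) ≤ _
        rw [hT x (z j) (hz j)]
        nlinarith [hμ_le j, sq_nonneg ‖fa x (φ (z j))‖]
    _ ≤ M ^ 2 * K * ‖T x‖ ^ 2 := by
        rw [mul_assoc]
        gcongr
        exact hCarleson (T x)

theorem stmt5 (φ : ℂ → ℂ)
    (hφ_diff : DifferentiableOn ℂ φ (Metric.ball 0 1))
    (hφ_maps : Set.MapsTo φ (Metric.ball 0 1) (Metric.ball 0 1))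
    (T : H2 →L[ℂ] H2)
    (hT : ∀ (a : H2) (z : ℂ), ‖z‖ < 1 → fa (T a) z = fa a (φ z))
    (n : ℕ) (hn : 1 ≤ n)
    (z : Fin n → ℂ) (hz : ∀ j, ‖z j‖ < 1)
    (hz_inj : Function.Injective z)
    (hφz_inj : Function.Injective (fun j => φ (z j)))
    (K : ℝ) (hK : 0 < K)
    (hCarleson : ∀ a : H2,
      ∑ j : Fin n, (1 - ‖z j‖ ^ 2) * ‖fa a (z j)‖ ^ 2 ≤ K * ‖a‖ ^ 2)
    (M : ℝ) (hM : 0 < M)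
    (hInterp : ∀ w : Fin n → ℂ, ∃ a : H2,
      (∀ j, fa a (φ (z j)) = w j) ∧
      ‖a‖ ^ 2 ≤ M ^ 2 * ∑ j : Fin n, ‖w j‖ ^ 2 * (1 - ‖φ (z j)‖ ^ 2)) :
    approxNum T n ≥
      M⁻¹ * (Real.sqrt K)⁻¹ *
        Real.sqrt (⨅ j : Fin n, (1 - ‖z j‖ ^ 2) / (1 - ‖φ (z j)‖ ^ 2)) :=
  stmt5_general φ hφ_maps T hT n hn z hz K hK hCarleson M hM hInterp

end
end

section
/- Let H be a complex Hilbert space, T : H → H a bounded linear operator, and n ≥ 1 an integer. Then a_n(T) equals the n-th Bernstein number of T, namely a_n(T) = sup_{E} inf{ ‖Tx‖ : x ∈ E, ‖x‖ = 1 }, where the supremum is taken over all subspaces E of H of dimension exactly n. -/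
/-!
If `dim E = n` and `rank R < n`, then `E` contains a unit vector `x` with `R x = 0`, so
`‖T x‖ = ‖(T - R) x‖ ≤ ‖T - R‖`: the Bernstein number is at most the approximation number.
Conversely, given `b_n(T) < u < v`, cut the spectrum of `T*T` between `u²` and `v²` with a
continuous function `h` (equal to `1` below `u²`, to `0` above `v²`) and let `K = ker h(T*T)`.
Then `‖T x‖ ≥ u ‖x‖` on `K`, which forces `dim K < n`, and `‖T y‖ ≤ v ‖y‖` on `Kᗮ`, the closure
of the range of `h(T*T)`. Hence `R = T ∘ P_K` has rank `< n` and `‖T - R‖ ≤ v`.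
-/

open Set RCLike ContinuousLinearMap InnerProductSpace

section Normed

variable {𝕜 E F : Type*} [RCLike 𝕜] [NormedAddCommGroup E] [NormedSpace 𝕜 E]
  [NormedAddCommGroup F] [NormedSpace 𝕜 F]

noncomputable def approxNumber (T : E →L[𝕜] F) (n : ℕ) : ℝ :=
  sInf {c : ℝ | ∃ R : E →L[𝕜] F,
    FiniteDimensional 𝕜 (LinearMap.range R.toLinearMap) ∧
    Module.finrank 𝕜 (LinearMap.range R.toLinearMap) ≤ n - 1 ∧ c = ‖T - R‖}

noncomputable def minModulusOn (T : E →L[𝕜] F) (V : Submodule 𝕜 E) : ℝ :=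
  sInf {d : ℝ | ∃ x : E, x ∈ V ∧ ‖x‖ = 1 ∧ d = ‖T x‖}

noncomputable def bernsteinNumber (T : E →L[𝕜] F) (n : ℕ) : ℝ :=
  sSup {c : ℝ | ∃ V : Submodule 𝕜 E, Module.finrank 𝕜 V = n ∧ c = minModulusOn T V}

variable (T : E →L[𝕜] F)

lemma approxNumber_nonneg (n : ℕ) : 0 ≤ approxNumber T n :=
  Real.sInf_nonneg <| by rintro c ⟨R, -, -, rfl⟩; exact norm_nonneg _

lemma approxNumber_le {n : ℕ} (R : E →L[𝕜] F) [FiniteDimensional 𝕜 (LinearMap.range R.toLinearMap)]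
    (hR : Module.finrank 𝕜 (LinearMap.range R.toLinearMap) ≤ n - 1) :
    approxNumber T n ≤ ‖T - R‖ :=
  csInf_le ⟨0, by rintro c ⟨R, -, -, rfl⟩; exact norm_nonneg _⟩ ⟨R, inferInstance, hR, rfl⟩

lemma le_approxNumber {n : ℕ} {c : ℝ} (hc : ∀ R : E →L[𝕜] F,
      FiniteDimensional 𝕜 (LinearMap.range R.toLinearMap) →
      Module.finrank 𝕜 (LinearMap.range R.toLinearMap) ≤ n - 1 → c ≤ ‖T - R‖) :
    c ≤ approxNumber T n := by
  refine le_csInf ⟨‖T - 0‖, 0, ?_, ?_, rfl⟩ ?_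
  · rw [toLinearMap_zero, LinearMap.range_zero]; infer_instance
  · rw [toLinearMap_zero, LinearMap.range_zero, finrank_bot]; exact Nat.zero_le _
  · rintro _ ⟨R, hfin, hR, rfl⟩
    exact hc R hfin hR

lemma minModulusOn_nonneg (V : Submodule 𝕜 E) : 0 ≤ minModulusOn T V :=
  Real.sInf_nonneg <| by rintro d ⟨x, -, -, rfl⟩; exact norm_nonneg _

lemma minModulusOn_le {V : Submodule 𝕜 E} {x : E} (hxV : x ∈ V) (hx : ‖x‖ = 1) :
    minModulusOn T V ≤ ‖T x‖ :=
  csInf_le ⟨0, by rintro d ⟨y, -, -, rfl⟩; exact norm_nonneg _⟩ ⟨x, hxV, hx, rfl⟩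

lemma exists_mem_norm_eq_one_of_ne_bot {V : Submodule 𝕜 E} (hV : V ≠ ⊥) : ∃ x ∈ V, ‖x‖ = 1 := by
  obtain ⟨x, hxV, hx⟩ := V.exists_mem_ne_zero_of_ne_bot hV
  exact ⟨(‖x‖⁻¹ : 𝕜) • x, V.smul_mem _ hxV, norm_smul_inv_norm hx⟩

lemma minModulusOn_le_opNorm (V : Submodule 𝕜 E) : minModulusOn T V ≤ ‖T‖ := by
  rcases eq_or_ne V ⊥ with rfl | hV
  · simp [minModulusOn]
  · obtain ⟨x, hxV, hx⟩ := exists_mem_norm_eq_one_of_ne_bot hV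
    calc minModulusOn T V ≤ ‖T x‖ := minModulusOn_le T hxV hx
      _ ≤ ‖T‖ := T.unit_le_opNorm x hx.le

lemma le_minModulusOn {V : Submodule 𝕜 E} (hV : V ≠ ⊥) {u : ℝ} (hu : ∀ x ∈ V, u * ‖x‖ ≤ ‖T x‖) :
    u ≤ minModulusOn T V := by
  obtain ⟨x, hxV, hx⟩ := exists_mem_norm_eq_one_of_ne_bot hV
  refine le_csInf ⟨_, x, hxV, hx, rfl⟩ ?_
  rintro _ ⟨y, hyV, hy, rfl⟩
  simpa [hy] using hu y hyV

lemma exists_mem_norm_eq_one_apply_eq_zero {V : Submodule 𝕜 E} [FiniteDimensional 𝕜 V]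
    (R : E →ₗ[𝕜] F) [FiniteDimensional 𝕜 (LinearMap.range R)]
    (hR : Module.finrank 𝕜 (LinearMap.range R) < Module.finrank 𝕜 V) :
    ∃ x ∈ V, ‖x‖ = 1 ∧ R x = 0 := by
  obtain ⟨x, hx, hx0⟩ := Submodule.exists_mem_ne_zero_of_ne_bot
    (LinearMap.ker_ne_bot_of_finrank_lt (f := R.rangeRestrict ∘ₗ V.subtype) hR)
  have hVR : V ⊓ LinearMap.ker R ≠ ⊥ := by
    refine (Submodule.ne_bot_iff _).mpr ⟨x, ⟨x.2, ?_⟩, fun h => hx0 (Subtype.ext h)⟩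
    simpa using congrArg Subtype.val hx
  obtain ⟨y, ⟨hyV, hyR⟩, hy⟩ := exists_mem_norm_eq_one_of_ne_bot hVR
  exact ⟨y, hyV, hy, hyR⟩

lemma minModulusOn_le_approxNumber {n : ℕ} (hn : 0 < n) {V : Submodule 𝕜 E}
    (hV : Module.finrank 𝕜 V = n) : minModulusOn T V ≤ approxNumber T n := by
  have : FiniteDimensional 𝕜 V := .of_finrank_pos (hV ▸ hn)
  refine le_approxNumber T fun R _ hR => ?_
  obtain ⟨x, hxV, hx, hRx⟩ := exists_mem_norm_eq_one_apply_eq_zero (V := V) (R : E →ₗ[𝕜] F)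
    (by omega)
  calc minModulusOn T V ≤ ‖T x‖ := minModulusOn_le T hxV hx
    _ = ‖(T - R) x‖ := by simp_all
    _ ≤ ‖T - R‖ := (T - R).unit_le_opNorm x hx.le

lemma bernsteinNumber_le_approxNumber {n : ℕ} (hn : 0 < n) :
    bernsteinNumber T n ≤ approxNumber T n :=
  Real.sSup_le (fun _ ⟨_, hV, hc⟩ => hc ▸ minModulusOn_le_approxNumber T hn hV)
    (approxNumber_nonneg T n)

lemma minModulusOn_le_bernsteinNumber {V : Submodule 𝕜 E} :
    minModulusOn T V ≤ bernsteinNumber T (Module.finrank 𝕜 V) :=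
  le_csSup ⟨‖T‖, fun _ ⟨W, _, hc⟩ => hc ▸ minModulusOn_le_opNorm T W⟩ ⟨V, rfl, rfl⟩

lemma rank_lt_of_bernsteinNumber_lt {n : ℕ} (hn : 0 < n) {K : Submodule 𝕜 E} {u : ℝ}
    (hK : ∀ x ∈ K, u * ‖x‖ ≤ ‖T x‖) (hu : bernsteinNumber T n < u) :
    Module.rank 𝕜 K < n := by
  by_contra! hnK
  obtain ⟨f, hf⟩ := exists_linearIndependent_of_le_rank hnK
  set V := Submodule.span 𝕜 (range (K.subtype ∘ f))
  have hVn : Module.finrank 𝕜 V = n := by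
    rw [finrank_span_eq_card (hf.map' K.subtype K.ker_subtype), Fintype.card_fin]
  have hVK : V ≤ K := Submodule.span_le.mpr <| by rintro _ ⟨i, rfl⟩; exact (f i).2
  have hV : V ≠ ⊥ := fun h => by rw [h, finrank_bot] at hVn; omega
  have := le_minModulusOn T hV fun x hx => hK x (hVK hx)
  have := minModulusOn_le_bernsteinNumber T (V := V)
  rw [hVn] at this
  linarith

end Normed

section InnerProduct

variable {𝕜 E F : Type*} [RCLike 𝕜] [NormedAddCommGroup E] [InnerProductSpace 𝕜 E]
  [NormedAddCommGroup F] [NormedSpace 𝕜 F] (T : E →L[𝕜] F)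

lemma re_inner_le_re_inner_of_le {A B : E →L[𝕜] E} (h : A ≤ B) (x : E) :
    re ⟪A x, x⟫_𝕜 ≤ re ⟪B x, x⟫_𝕜 := by
  simpa [inner_sub_left] using ((le_def A B).mp h).re_inner_nonneg_left x

lemma approxNumber_le_of_forall_mem_orthogonal {n : ℕ} {K : Submodule 𝕜 E}
    (hK : Module.rank 𝕜 K < n) {v : ℝ} (hv : 0 ≤ v) (hT : ∀ y ∈ Kᗮ, ‖T y‖ ≤ v * ‖y‖) :
    approxNumber T n ≤ v := by
  have : FiniteDimensional 𝕜 K :=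
    Module.rank_lt_aleph0_iff.mp (hK.trans Cardinal.natCast_lt_aleph0)
  set R := T ∘L K.starProjection
  have hRK : LinearMap.range R.toLinearMap = K.map T.toLinearMap := by
    simp [R, LinearMap.range_comp]
  have : FiniteDimensional 𝕜 (LinearMap.range R.toLinearMap) := hRK ▸ inferInstance
  have hR : Module.finrank 𝕜 (LinearMap.range R.toLinearMap) ≤ n - 1 := by
    have := Module.finrank_lt_of_rank_lt hK
    have := Submodule.finrank_map_le T.toLinearMap K
    rw [hRK]; omega
  refine (approxNumber_le T R hR).trans (opNorm_le_bound _ hv fun x => ?_)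
  have hTR : (T - R) x = T (Kᗮ.starProjection x) := by
    simp [R, K.starProjection_orthogonal']
  calc ‖(T - R) x‖ ≤ v * ‖Kᗮ.starProjection x‖ := hTR ▸ hT _ (Kᗮ.starProjection_apply_mem x)
    _ ≤ v * ‖x‖ := mul_le_mul_of_nonneg_left (Kᗮ.norm_starProjection_apply_le x) hv

end InnerProduct

section Spectral

variable {H : Type*} [NormedAddCommGroup H] [InnerProductSpace ℂ H] [CompleteSpace H]

lemma re_inner_cfc_const_apply_self {S : H →L[ℂ] H} (hS : IsSelfAdjoint S) (c : ℝ) (y : H) :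
    re ⟪cfc (fun _ => c) S y, y⟫_ℂ = c * ‖y‖ ^ 2 := by
  rw [cfc_const c S hS, Algebra.algebraMap_eq_smul_one, smul_apply, one_apply_eq_self,
    real_smul_eq_coe_smul (K := ℂ), inner_smul_real_left, smul_re, inner_self_eq_norm_sq]

lemma re_inner_cfc_apply_le {S : H →L[ℂ] H} {f g k : ℝ → ℝ}
    (hf : ContinuousOn f (spectrum ℝ S)) (hg : ContinuousOn g (spectrum ℝ S))
    (hk : ContinuousOn k (spectrum ℝ S))
    (hgk : ∀ s ∈ spectrum ℝ S, f s * g s * f s ≤ f s * k s * f s) (x : H) :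
    re ⟪cfc g S (cfc f S x), cfc f S x⟫_ℂ ≤ re ⟪cfc k S (cfc f S x), cfc f S x⟫_ℂ := by
  have hconj (j : ℝ → ℝ) (hj : ContinuousOn j (spectrum ℝ S)) :
      ⟪cfc j S (cfc f S x), cfc f S x⟫_ℂ = ⟪cfc (fun s => f s * j s * f s) S x, x⟫_ℂ := by
    rw [cfc_mul (fun s => f s * j s) f S (hf.mul hj) hf, cfc_mul f j S hf hj, mul_apply_eq_comp,
      mul_apply_eq_comp]
    exact ((cfc_predicate f S).isSymmetric _ _).symm
  rw [hconj g hg, hconj k hk]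
  exact re_inner_le_re_inner_of_le (cfc_mono hgk) x

theorem IsSelfAdjoint.exists_submodule_re_inner_bounds {S : H →L[ℂ] H}
    (hS : IsSelfAdjoint S) {α β : ℝ} (hαβ : α < β) :
    ∃ K : Submodule ℂ H, (∀ x ∈ K, α * ‖x‖ ^ 2 ≤ re ⟪S x, x⟫_ℂ) ∧
      ∀ y ∈ Kᗮ, re ⟪S y, y⟫_ℂ ≤ β * ‖y‖ ^ 2 := by
  obtain ⟨h, h_zero, h_one, -⟩ := exists_continuous_zero_one_of_isClosed isClosed_Ici isClosed_Iic
    (Ici_disjoint_Iic.mpr (not_le.mpr hαβ))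
  -- `K = ker h(S)` plays the spectral subspace of `S` for `{h = 0} ⊆ (α, ∞)`,
  -- and `Kᗮ` the one for `{h ≠ 0} ⊆ (-∞, β)`.
  refine ⟨LinearMap.ker ((cfc h S : H →L[ℂ] H) : H →ₗ[ℂ] H), fun x hx => ?_, fun y hy => ?_⟩
  · have hx : cfc (fun s => 1 - h s) S x = x := by
      rw [cfc_sub (fun _ => 1) h S, cfc_const_one ℝ S]
      simp_all
    have := re_inner_cfc_apply_le (S := S) (f := fun s => 1 - h s) (g := fun _ => α)
      (k := fun s => s) (by fun_prop) (by fun_prop) (by fun_prop) ?_ x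
    · rwa [hx, re_inner_cfc_const_apply_self hS, cfc_id' ℝ S] at this
    intro s _
    rcases le_or_gt s α with hs | hs
    · simp [h_one hs]
    · nlinarith [mul_self_nonneg (1 - h s)]
  · rw [orthogonal_ker, (cfc_predicate h S).adjoint_eq] at hy
    have hclosed : IsClosed {w : H | re ⟪S w, w⟫_ℂ ≤ β * ‖w‖ ^ 2} :=
      isClosed_le (by fun_prop) (by fun_prop)
    refine closure_minimal ?_ hclosed hy
    rintro _ ⟨x, rfl⟩
    have := re_inner_cfc_apply_le (S := S) (f := h) (g := fun s => s) (k := fun _ => β)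
      (by fun_prop) (by fun_prop) (by fun_prop) ?_ x
    · rwa [re_inner_cfc_const_apply_self hS, cfc_id' ℝ S] at this
    intro s _
    rcases le_or_gt β s with hs | hs
    · simp [h_zero hs]
    · nlinarith [mul_self_nonneg (h s)]

variable {F : Type*} [NormedAddCommGroup F] [InnerProductSpace ℂ F] [CompleteSpace F]

theorem exists_submodule_mul_norm_le_and_norm_le_mul_orthogonal (T : H →L[ℂ] F) {u v : ℝ}
    (hu : 0 ≤ u) (huv : u < v) :
    ∃ K : Submodule ℂ H, (∀ x ∈ K, u * ‖x‖ ≤ ‖T x‖) ∧ ∀ y ∈ Kᗮ, ‖T y‖ ≤ v * ‖y‖ := by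
  have hv : 0 ≤ v := hu.trans huv.le
  obtain ⟨K, hK, hKperp⟩ :=
    (isPositive_adjoint_comp_self T).isSelfAdjoint.exists_submodule_re_inner_bounds
      (pow_lt_pow_left₀ huv hu two_ne_zero)
  refine ⟨K, fun x hx => ?_, fun y hy => ?_⟩
  · have := hK x hx
    rw [← apply_norm_sq_eq_inner_adjoint_left, ← mul_pow] at this
    exact (pow_le_pow_iff_left₀ (by positivity) (norm_nonneg _) two_ne_zero).mp this
  · have := hKperp y hy
    rw [← apply_norm_sq_eq_inner_adjoint_left, ← mul_pow] at this
    exact (pow_le_pow_iff_left₀ (norm_nonneg _) (by positivity) two_ne_zero).mp this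

theorem approxNumber_le_bernsteinNumber (T : H →L[ℂ] F) {n : ℕ} (hn : 0 < n) :
    approxNumber T n ≤ bernsteinNumber T n := by
  refine le_of_forall_gt_imp_ge_of_dense fun v hv => ?_
  obtain ⟨u, hbu, huv⟩ := exists_between hv
  have hb : 0 ≤ bernsteinNumber T n :=
    Real.sSup_nonneg fun _ ⟨V, _, hc⟩ => hc ▸ minModulusOn_nonneg T V
  obtain ⟨K, hK, hKperp⟩ :=
    exists_submodule_mul_norm_le_and_norm_le_mul_orthogonal T (hb.trans hbu.le) huv
  exact approxNumber_le_of_forall_mem_orthogonal T (rank_lt_of_bernsteinNumber_lt T hn hK hbu)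
    (by linarith) hKperp

theorem approxNumber_eq_bernsteinNumber (T : H →L[ℂ] F) {n : ℕ} (hn : 0 < n) :
    approxNumber T n = bernsteinNumber T n :=
  (approxNumber_le_bernsteinNumber T hn).antisymm (bernsteinNumber_le_approxNumber T hn)

end Spectral

theorem stmt8 (H : Type*) [NormedAddCommGroup H] [InnerProductSpace ℂ H]
    [CompleteSpace H] (T : H →L[ℂ] H) (n : ℕ) (hn : 1 ≤ n) :
    sInf {c : ℝ | ∃ R : H →L[ℂ] H,
        FiniteDimensional ℂ (LinearMap.range R.toLinearMap) ∧
        Module.finrank ℂ (LinearMap.range R.toLinearMap) ≤ n - 1 ∧ c = ‖T - R‖}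
      =
    sSup {c : ℝ | ∃ E : Submodule ℂ H, Module.finrank ℂ E = n ∧
        c = sInf {d : ℝ | ∃ x : H, x ∈ E ∧ ‖x‖ = 1 ∧ d = ‖T x‖}} :=
  approxNumber_eq_bernsteinNumber T hn
end

section
/- Let z_1, …, z_N be distinct points of 𝔻 and let M > 0 be such that for every (w_1,…,w_N) ∈ ℂ^N there exists a ∈ ℓ² with f_a(z_j) = w_j for all j and ‖a‖²_{ℓ²} ≤ M²·∑_{j=1}^N |w_j|²(1 − |z_j|²) (i.e. (z_j) is an interpolating sequence for H² with constant of interpolation at most M). Then for every (b_1,…,b_N) ∈ ℂ^N: ∑_{j=1}^N ∑_{l=1}^N b_j·\overline{b_l}/(1 − \overline{z_j} z_l) ≥ M^{−2}·∑_{j=1}^N |b_j|²/(1 − |z_j|²), the left-hand side being real (it equals ‖∑_j b_j k_{z_j}‖²_{H²}, where k_w(z) = 1/(1 − \overline{w} z)). -/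
open Complex

noncomputable section

/-!
Evaluation at `w ∈ 𝔻` is the inner product with the Szegő kernel `k_w = (conj w ^ k)ₖ`, and
`⟪k_v, k_w⟫ = 1 / (1 - conj w * v)`, so the double sum is `‖c‖²` for `c = ∑ⱼ bⱼ k_{zⱼ}`.
Interpolating `wⱼ = bⱼ / (1 - |zⱼ|²)` by some `a` gives `⟪c, a⟫ = T := ∑ⱼ |bⱼ|² / (1 - |zⱼ|²)`,
and Cauchy–Schwarz with `‖a‖² ≤ M² T` yields `T² ≤ ‖c‖² M² T`.
-/

lemma memℓp_pow_of_norm_lt_one {𝕜 : Type*} [NormedDivisionRing 𝕜] {w : 𝕜} (hw : ‖w‖ < 1)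
    {p : ENNReal} (hp : 0 < p.toReal) : Memℓp (fun k : ℕ => w ^ k) p := by
  refine memℓp_gen ((summable_geometric_of_lt_one (r := ‖w‖ ^ p.toReal) (by positivity)
    (Real.rpow_lt_one (norm_nonneg w) hw hp)).congr fun k => ?_)
  rw [norm_pow, Real.rpow_pow_comm (norm_nonneg w)]

def szegoKernel (w : ℂ) (hw : ‖w‖ < 1) : H2 :=
  ⟨fun k => starRingEnd ℂ w ^ k,
    memℓp_pow_of_norm_lt_one (by rwa [RCLike.norm_conj]) (by norm_num)⟩

lemma fa_eq_inner_szegoKernel (a : H2) {w : ℂ} (hw : ‖w‖ < 1) :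
    fa a w = inner ℂ (szegoKernel w hw) a := by
  rw [lp.inner_eq_tsum, fa]
  refine tsum_congr fun k => ?_
  simp [szegoKernel, mul_comm]

lemma inner_szegoKernel_szegoKernel {v w : ℂ} (hv : ‖v‖ < 1) (hw : ‖w‖ < 1) :
    inner ℂ (szegoKernel v hv) (szegoKernel w hw) = (1 - starRingEnd ℂ w * v)⁻¹ := by
  have hwv : ‖starRingEnd ℂ w * v‖ < 1 := by
    rw [norm_mul, RCLike.norm_conj]
    nlinarith [norm_nonneg w, norm_nonneg v]
  rw [← fa_eq_inner_szegoKernel, fa, ← tsum_geometric_of_norm_lt_one hwv]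
  simp [szegoKernel, mul_pow]

lemma inner_sum_szegoKernel {N : ℕ} (z : Fin N → ℂ) (hz : ∀ j, ‖z j‖ < 1) (b : Fin N → ℂ)
    (a : H2) :
    inner ℂ (∑ j, b j • szegoKernel (z j) (hz j)) a = ∑ j, starRingEnd ℂ (b j) * fa a (z j) := by
  simp only [sum_inner, inner_smul_left, ← fa_eq_inner_szegoKernel]

lemma gram_sum_eq_norm_sq {N : ℕ} (z : Fin N → ℂ) (hz : ∀ j, ‖z j‖ < 1) (b : Fin N → ℂ) :
    ∑ j, ∑ l, b j * starRingEnd ℂ (b l) / (1 - starRingEnd ℂ (z j) * z l) =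
      ((‖∑ j, b j • szegoKernel (z j) (hz j)‖ ^ 2 : ℝ) : ℂ) := by
  have hterm : ∀ j l, b j * starRingEnd ℂ (b l) / (1 - starRingEnd ℂ (z j) * z l) =
      inner ℂ (b l • szegoKernel (z l) (hz l)) (b j • szegoKernel (z j) (hz j)) := by
    intro j l
    rw [inner_smul_left, inner_smul_right, inner_szegoKernel_szegoKernel]
    ring
  simp only [hterm, ← sum_inner, ← inner_sum]
  exact_mod_cast inner_self_eq_norm_sq_to_K (𝕜 := ℂ) (_ : H2)

lemma inv_sq_mul_le_sq_of_le_mul {x y T M : ℝ} (hx : 0 ≤ x) (hy : 0 ≤ y) (hT : T ≤ x * y)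
    (hyT : y ^ 2 ≤ M ^ 2 * T) : M⁻¹ ^ 2 * T ≤ x ^ 2 := by
  rcases le_or_gt T 0 with hT0 | hT0
  · nlinarith [sq_nonneg M⁻¹, sq_nonneg x]
  have hTx : T ≤ M ^ 2 * x ^ 2 := by
    have : T * T ≤ T * (M ^ 2 * x ^ 2) := by
      nlinarith [mul_le_mul hT hT hT0.le (mul_nonneg hx hy), mul_le_mul_of_nonneg_left hyT (sq_nonneg x)]
    exact le_of_mul_le_mul_left this hT0
  calc M⁻¹ ^ 2 * T ≤ M⁻¹ ^ 2 * (M ^ 2 * x ^ 2) := by gcongr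
    _ = (M⁻¹ * M) ^ 2 * x ^ 2 := by ring
    _ ≤ x ^ 2 := by
      rcases eq_or_ne M 0 with rfl | hM
      · simp [sq_nonneg]
      · simp [hM]

theorem stmt10_general (N : ℕ) (z : Fin N → ℂ) (hz : ∀ j, ‖z j‖ < 1)
    (M : ℝ)
    (hInterp : ∀ w : Fin N → ℂ, ∃ a : H2,
      (∀ j, fa a (z j) = w j) ∧
      ‖a‖ ^ 2 ≤ M ^ 2 * ∑ j : Fin N, ‖w j‖ ^ 2 * (1 - ‖z j‖ ^ 2))
    (b : Fin N → ℂ) :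
    (∑ j : Fin N, ∑ l : Fin N,
        b j * (starRingEnd ℂ) (b l) / (1 - (starRingEnd ℂ) (z j) * z l)).im = 0 ∧
    M⁻¹ ^ 2 * ∑ j : Fin N, ‖b j‖ ^ 2 / (1 - ‖z j‖ ^ 2) ≤
      (∑ j : Fin N, ∑ l : Fin N,
        b j * (starRingEnd ℂ) (b l) / (1 - (starRingEnd ℂ) (z j) * z l)).re := by
  set c := ∑ j, b j • szegoKernel (z j) (hz j)
  set r : Fin N → ℝ := fun j => 1 - ‖z j‖ ^ 2
  have hr : ∀ j, r j ≠ 0 := fun j => by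
    nlinarith [hz j, norm_nonneg (z j)]
  obtain ⟨a, ha_interp, ha_norm⟩ := hInterp fun j => b j / (r j : ℂ)
  have hw : ∑ j, ‖b j / (r j : ℂ)‖ ^ 2 * r j = ∑ j, ‖b j‖ ^ 2 / r j := by
    refine Finset.sum_congr rfl fun j _ => ?_
    rw [norm_div, Complex.norm_real, div_pow, Real.norm_eq_abs, sq_abs]
    field_simp [hr j]
  have hinner : inner ℂ c a = ((∑ j, ‖b j‖ ^ 2 / r j : ℝ) : ℂ) := by
    rw [inner_sum_szegoKernel, ofReal_sum]
    refine Finset.sum_congr rfl fun j _ => ?_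
    rw [ha_interp, mul_div_assoc', conj_mul', ofReal_div]
    push_cast; rfl
  rw [gram_sum_eq_norm_sq z hz b, ofReal_im, ofReal_re]
  refine ⟨rfl, inv_sq_mul_le_sq_of_le_mul (norm_nonneg c) (norm_nonneg a) ?_ (hw ▸ ha_norm)⟩
  have hCS := norm_inner_le_norm (𝕜 := ℂ) c a
  rw [hinner, norm_real, Real.norm_eq_abs] at hCS
  exact (le_abs_self _).trans hCS

theorem stmt10 (N : ℕ) (z : Fin N → ℂ) (hz : ∀ j, ‖z j‖ < 1)
    (hz_inj : Function.Injective z)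
    (M : ℝ) (hM : 0 < M)
    (hInterp : ∀ w : Fin N → ℂ, ∃ a : H2,
      (∀ j, fa a (z j) = w j) ∧
      ‖a‖ ^ 2 ≤ M ^ 2 * ∑ j : Fin N, ‖w j‖ ^ 2 * (1 - ‖z j‖ ^ 2))
    (b : Fin N → ℂ) :
    (∑ j : Fin N, ∑ l : Fin N,
        b j * (starRingEnd ℂ) (b l) / (1 - (starRingEnd ℂ) (z j) * z l)).im = 0 ∧
    M⁻¹ ^ 2 * ∑ j : Fin N, ‖b j‖ ^ 2 / (1 - ‖z j‖ ^ 2) ≤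
      (∑ j : Fin N, ∑ l : Fin N,
        b j * (starRingEnd ℂ) (b l) / (1 - (starRingEnd ℂ) (z j) * z l)).re :=
  stmt10_general N z hz M hInterp b
end
end

section
/- Let 0 < λ < 1 and set z_j := (1 − λ^j)/(1 + λ^j) for integers j ≥ 1. Then for every j ≥ 1 and every finite set S of positive integers with j ∉ S: ∏_{k ∈ S} |(z_j − z_k)/(1 − z_j·z_k)| ≥ exp(−(π²/2)/(1 − λ)). (Consequently the separation constant δ(Z(λ)) = inf_j ∏_{k ≠ j} |(z_j − z_k)/(1 − z_j z_k)| of the sequence Z(λ) = (z_j)_{j≥1} satisfies δ(Z(λ)) ≥ e^{−(π²/2)/(1−λ)}.) -/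
/-!
With `x = λ^a`, `y = λ^b` the points are `z = (1 - x)/(1 + x)`, and the pseudohyperbolic distance
between them is `|y - x|/(x + y) = (1 - λ^d)/(1 + λ^d)` with `d = |a - b|`. Each value of `d`
occurs at most twice (once on each side of `j`), so it suffices to bound
`∑_{d ≥ 1} log ((1 + λ^d)/(1 - λ^d))` by `π²/(4(1 - λ))`. Expanding
`log ((1 + x)/(1 - x)) = ∑_{n odd} 2 xⁿ/n` and summing over `d` first gives
`∑_{n odd} (2/n) λⁿ/(1 - λⁿ) ≤ ∑_{n odd} 2/(n²(1 - λ)) = π²/(4(1 - λ))`,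
using `n λⁿ ≤ 1 + λ + ⋯ + λⁿ⁻¹` and `∑_{n odd} 1/n² = π²/8`.
-/

open Real Finset

theorem hasSum_one_div_odd_sq :
    HasSum (fun k : ℕ => 1 / (2 * (k : ℝ) + 1) ^ 2) (π ^ 2 / 8) := by
  set f : ℕ → ℝ := fun n => 1 / (n : ℝ) ^ 2
  have heven : HasSum (fun k => f (2 * k)) (π ^ 2 / 24) := by
    have h := hasSum_zeta_two.mul_left (1 / 4)
    rw [show (1 / 4) * (π ^ 2 / 6) = π ^ 2 / 24 by ring] at h
    refine h.congr_fun fun k => ?_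
    simp only [f]; push_cast; ring
  obtain ⟨t, hodd⟩ : Summable (fun k => f (2 * k + 1)) :=
    hasSum_zeta_two.summable.comp_injective (fun a b h => by simpa using h)
  have ht : π ^ 2 / 24 + t = π ^ 2 / 6 := (heven.even_add_odd hodd).unique hasSum_zeta_two
  rw [show π ^ 2 / 8 = t by linarith]
  refine hodd.congr_fun fun k => ?_
  simp only [f]; push_cast; ring

theorem sum_pow_le_div_one_sub {y : ℝ} (hy₀ : 0 ≤ y) (hy₁ : y < 1) {T : Finset ℕ}
    (hT : 0 ∉ T) : ∑ m ∈ T, y ^ m ≤ y / (1 - y) := by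
  have h : ∑ m ∈ insert 0 T, y ^ m ≤ (1 - y)⁻¹ := by
    rw [← tsum_geometric_of_lt_one hy₀ hy₁]
    exact (summable_geometric_of_lt_one hy₀ hy₁).sum_le_tsum _ fun m _ => by positivity
  rw [sum_insert hT, pow_zero] at h
  have : y / (1 - y) = (1 - y)⁻¹ - 1 := by field_simp [(sub_pos.2 hy₁).ne']; ring
  linarith

theorem nat_mul_pow_le_sum_range_pow {l : ℝ} (hl₀ : 0 ≤ l) (hl₁ : l ≤ 1) (n : ℕ) :
    n * l ^ n ≤ ∑ i ∈ range n, l ^ i := by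
  calc (n : ℝ) * l ^ n = ∑ _i ∈ range n, l ^ n := by simp
    _ ≤ ∑ i ∈ range n, l ^ i :=
      sum_le_sum fun i hi => pow_le_pow_of_le_one hl₀ hl₁ (mem_range.1 hi).le

theorem pow_div_one_sub_pow_le {l : ℝ} (hl₀ : 0 ≤ l) (hl₁ : l < 1) {n : ℕ}
    (hn : n ≠ 0) :
    l ^ n / (1 - l ^ n) ≤ 1 / (n * (1 - l)) := by
  have h1l : 0 < 1 - l := by linarith
  have hgeom : 1 - l ^ n = (1 - l) * ∑ i ∈ range n, l ^ i := by
    rw [mul_comm, geom_sum_mul_neg]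
  have hsum := nat_mul_pow_le_sum_range_pow hl₀ hl₁.le n
  have hpos : 0 < 1 - l ^ n := by linarith [pow_lt_one₀ hl₀ hl₁ hn]
  rw [div_le_div_iff₀ hpos (by positivity), hgeom]
  nlinarith

theorem sum_log_one_add_sub_log_one_sub_pow_le {l : ℝ} (hl₀ : 0 ≤ l) (hl₁ : l < 1)
    {T : Finset ℕ} (hT : 0 ∉ T) :
    ∑ m ∈ T, (log (1 + l ^ m) - log (1 - l ^ m)) ≤ π ^ 2 / 4 / (1 - l) := by
  have h1l : 0 < 1 - l := by linarith
  have hterm : ∀ m ∈ T, HasSum (fun k : ℕ => 2 * (1 / (2 * k + 1)) * (l ^ m) ^ (2 * k + 1))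
      (log (1 + l ^ m) - log (1 - l ^ m)) := fun m hm =>
    hasSum_log_sub_log_of_abs_lt_one <| by
      rw [abs_of_nonneg (by positivity)]
      exact pow_lt_one₀ hl₀ hl₁ (ne_of_mem_of_not_mem hm hT)
  have hmajorant : HasSum (fun k : ℕ => 2 / (1 - l) * (1 / (2 * k + 1) ^ 2))
      (π ^ 2 / 4 / (1 - l)) := by
    rw [show π ^ 2 / 4 / (1 - l) = 2 / (1 - l) * (π ^ 2 / 8) by field_simp; ring]
    exact hasSum_one_div_odd_sq.mul_left _
  refine hasSum_le (fun k => ?_) (hasSum_sum hterm) hmajorant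
  have hk : (0 : ℝ) < 2 * k + 1 := by positivity
  have hratio := pow_div_one_sub_pow_le hl₀ hl₁ (2 * k).succ_ne_zero
  push_cast at hratio
  calc ∑ m ∈ T, 2 * (1 / (2 * k + 1)) * (l ^ m) ^ (2 * k + 1)
      = 2 / (2 * k + 1) * ∑ m ∈ T, (l ^ (2 * k + 1)) ^ m := by
        rw [mul_sum]; refine sum_congr rfl fun m _ => ?_; rw [← pow_mul, ← pow_mul']; ring
    _ ≤ 2 / (2 * k + 1) * (l ^ (2 * k + 1) / (1 - l ^ (2 * k + 1))) := by
        gcongr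
        exact sum_pow_le_div_one_sub (by positivity) (pow_lt_one₀ hl₀ hl₁ (by omega)) hT
    _ ≤ 2 / (2 * k + 1) * (1 / ((2 * k + 1) * (1 - l))) := by gcongr
    _ = 2 / (1 - l) * (1 / (2 * k + 1) ^ 2) := by field_simp

theorem cayley_pseudohyperbolic_ratio {x y : ℝ} (hx : 0 < x) (hy : 0 < y) :
    ((1 - x) / (1 + x) - (1 - y) / (1 + y)) / (1 - (1 - x) / (1 + x) * ((1 - y) / (1 + y))) =
      (y - x) / (x + y) := by
  have hden :
      1 - (1 - x) / (1 + x) * ((1 - y) / (1 + y)) = 2 * (x + y) / ((1 + x) * (1 + y)) := by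
    field_simp; ring
  have hxy : x + y ≠ 0 := by positivity
  rw [hden]
  field_simp
  ring

theorem abs_pow_sub_pow_div_pow_add_pow {l : ℝ} (hl₀ : 0 < l) (hl₁ : l ≤ 1) (a b : ℕ) :
    |(l ^ b - l ^ a) / (l ^ a + l ^ b)| = (1 - l ^ Nat.dist a b) / (1 + l ^ Nat.dist a b) := by
  wlog hab : a ≤ b generalizing a b
  · rw [Nat.dist_comm, ← this b a (le_of_not_ge hab), abs_div, abs_div, abs_sub_comm, add_comm]
  obtain ⟨d, rfl⟩ := Nat.exists_eq_add_of_le hab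
  have hd : Nat.dist a (a + d) = d := by simp [Nat.dist]
  have hpos : 0 < l ^ a := pow_pos hl₀ a
  have hratio : (l ^ (a + d) - l ^ a) / (l ^ a + l ^ (a + d)) = -((1 - l ^ d) / (1 + l ^ d)) := by
    rw [pow_add]; field_simp; ring
  rw [hd, hratio, abs_neg, abs_of_nonneg]
  have := pow_le_one₀ hl₀.le hl₁ (n := d)
  have := pow_pos hl₀ d
  exact div_nonneg (by linarith) (by linarith)

theorem one_sub_div_one_add_eq_exp {x : ℝ} (h₁ : -1 < x) (h₂ : x < 1) :
    (1 - x) / (1 + x) = exp (-(log (1 + x) - log (1 - x))) := by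
  rw [neg_sub, exp_sub, exp_log (by linarith), exp_log (by linarith)]

theorem sum_comp_dist_le_two_mul {h : ℕ → ℝ} {C : ℝ}
    (hC : ∀ T : Finset ℕ, 0 ∉ T → ∑ d ∈ T, h d ≤ C) {j : ℕ} {S : Finset ℕ}
    (hjS : j ∉ S) :
    ∑ k ∈ S, h (Nat.dist j k) ≤ 2 * C := by
  have hpart : ∀ p : ℕ → Prop, [DecidablePred p] → Set.InjOn (Nat.dist j) {k | p k} →
      ∑ k ∈ S.filter p, h (Nat.dist j k) ≤ C := by
    intro p _ hinj
    rw [← sum_image (hinj.mono (by intro k hk; exact (mem_filter.1 hk).2))]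
    refine hC _ fun h0 => ?_
    obtain ⟨k, hk, hjk⟩ := mem_image.1 h0
    exact hjS (Nat.eq_of_dist_eq_zero hjk ▸ (mem_filter.1 hk).1)
  rw [← sum_filter_add_sum_filter_not S (· < j), two_mul]
  refine add_le_add (hpart _ ?_) (hpart _ ?_) <;>
  · intro a ha b hb hab
    simp only [Set.mem_ofPred_eq, Nat.dist] at ha hb hab
    omega

theorem stmt18 (l : ℝ) (hl₀ : 0 < l) (hl₁ : l < 1)
    (z : ℕ → ℝ) (hz : ∀ j : ℕ, z j = (1 - l ^ j) / (1 + l ^ j)) :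
    ∀ j : ℕ, 1 ≤ j → ∀ S : Finset ℕ, (∀ k ∈ S, 1 ≤ k) → j ∉ S →
      Real.exp (-(Real.pi ^ 2 / 2) / (1 - l)) ≤
        ∏ k ∈ S, |(z j - z k) / (1 - z j * z k)| := by
  intro j _ S _ hjS
  set g : ℕ → ℝ := fun d => log (1 + l ^ d) - log (1 - l ^ d)
  have hfactor : ∀ k ∈ S, |(z j - z k) / (1 - z j * z k)| = exp (-g (Nat.dist j k)) := by
    intro k hk
    have hd : Nat.dist j k ≠ 0 := fun h => hjS (Nat.eq_of_dist_eq_zero h ▸ hk)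
    rw [hz, hz, cayley_pseudohyperbolic_ratio (pow_pos hl₀ j) (pow_pos hl₀ k),
      abs_pow_sub_pow_div_pow_add_pow hl₀ hl₁.le,
      one_sub_div_one_add_eq_exp (by linarith [pow_pos hl₀ (Nat.dist j k)])
        (pow_lt_one₀ hl₀.le hl₁ hd)]
  rw [prod_congr rfl hfactor, ← exp_sum, sum_neg_distrib, exp_le_exp, neg_div, neg_le_neg_iff]
  calc ∑ k ∈ S, g (Nat.dist j k) ≤ 2 * (π ^ 2 / 4 / (1 - l)) :=
        sum_comp_dist_le_two_mul
          (fun T hT => sum_log_one_add_sub_log_one_sub_pow_le hl₀.le hl₁ hT) hjS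
    _ = π ^ 2 / 2 / (1 - l) := by ring
end

section
/- Let x₀ > 0 and let η, ω : [x₀,∞) → (0,∞) be differentiable functions such that η is positive and nondecreasing with x·η'(x)/η(x) → 0 as x → ∞, ω is nondecreasing (ω'(x) ≥ 0), x/ω(x) → ∞ as x → ∞, and η(x/ω(x)) = ω(x) for all x ≥ x₀. Then x·ω'(x)/ω(x) → 0 as x → ∞. -/
open Filter Topology

/-!
Differentiating `η (x / ω x) = ω x` gives `ω' = η'(u) (ω - x ω') / ω²` with `u = x / ω x`, a linear
equation for `ω'`. Solving it, the elasticity `x ω' / ω` of `ω` at `x` equals `A / (1 + A)`, where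
`A = u η'(u) / η(u)` is the elasticity of `η` at `u`. Since `u → ∞`, `A → 0`, hence `A / (1 + A) → 0`.
-/

noncomputable def elasticity (f : ℝ → ℝ) (x : ℝ) : ℝ := x * deriv f x / f x

lemma mul_div_eq_div_one_add_of_eq_mul {w w' D x : ℝ} (hw : w ≠ 0)
    (h : w' = D * ((w - x * w') / w ^ 2)) :
    x * w' / w = x * D / w ^ 2 / (1 + x * D / w ^ 2) := by
  have hrel : w' * (w ^ 2 + D * x) = D * w := by
    field_simp at h
    linear_combination h
  have hden : w ^ 2 + x * D ≠ 0 := by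
    intro h0
    have hD : D = 0 := by
      have : D * w = 0 := by rw [← hrel, mul_comm D x, h0, mul_zero]
      simpa [hw] using this
    simp [hD, hw] at h0
  have hsum : 1 + x * D / w ^ 2 = (w ^ 2 + x * D) / w ^ 2 := by field_simp
  rw [hsum, div_div_div_cancel_right₀ (pow_ne_zero 2 hw), div_eq_div_iff hw hden]
  linear_combination x * hrel

lemma deriv_eq_of_comp_div_eventuallyEq {η ω : ℝ → ℝ} {x : ℝ}
    (hη : DifferentiableAt ℝ η (x / ω x)) (hω : DifferentiableAt ℝ ω x) (hω0 : ω x ≠ 0)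
    (h : (fun y => η (y / ω y)) =ᶠ[𝓝 x] ω) :
    deriv ω x = deriv η (x / ω x) * ((ω x - x * deriv ω x) / ω x ^ 2) := by
  have hquot : HasDerivAt (fun y => y / ω y) ((1 * ω x - x * deriv ω x) / ω x ^ 2) x :=
    (hasDerivAt_id x).div hω.hasDerivAt hω0
  simpa using ((hη.hasDerivAt.comp x hquot).congr_of_eventuallyEq h.symm).deriv

lemma elasticity_eq_of_comp_div_eventuallyEq {η ω : ℝ → ℝ} {x : ℝ}
    (hη : DifferentiableAt ℝ η (x / ω x)) (hω : DifferentiableAt ℝ ω x) (hω0 : ω x ≠ 0)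
    (h : (fun y => η (y / ω y)) =ᶠ[𝓝 x] ω) :
    elasticity ω x = elasticity η (x / ω x) / (1 + elasticity η (x / ω x)) := by
  have hA : elasticity η (x / ω x) = x * deriv η (x / ω x) / ω x ^ 2 := by
    rw [elasticity, h.eq_of_nhds]
    ring
  rw [hA, elasticity]
  exact mul_div_eq_div_one_add_of_eq_mul hω0 (deriv_eq_of_comp_div_eventuallyEq hη hω hω0 h)

lemma Filter.Tendsto.div_one_add_self {α : Type*} {l : Filter α} {f : α → ℝ}
    (hf : Tendsto f l (𝓝 0)) : Tendsto (fun a => f a / (1 + f a)) l (𝓝 0) := by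
  have h : Tendsto (fun a => f a / (1 + f a)) l (𝓝 (0 / (1 + 0))) :=
    hf.div (tendsto_const_nhds.add hf) (by norm_num)
  simpa using h

theorem stmt19_general (x₀ : ℝ) (η ω : ℝ → ℝ)
    (hη_diff : ∀ x : ℝ, x₀ ≤ x → DifferentiableAt ℝ η x)
    (hω_diff : ∀ x : ℝ, x₀ ≤ x → DifferentiableAt ℝ ω x)
    (hη_small : Tendsto (fun x => x * deriv η x / η x) atTop (nhds 0))
    (hquot : Tendsto (fun x => x / ω x) atTop atTop)
    (heq : ∀ x : ℝ, x₀ ≤ x → η (x / ω x) = ω x) :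
    Tendsto (fun x => x * deriv ω x / ω x) atTop (nhds 0) := by
  have hlim : Tendsto (fun x => elasticity η (x / ω x) / (1 + elasticity η (x / ω x)))
      atTop (𝓝 0) :=
    (hη_small.comp hquot).div_one_add_self
  refine hlim.congr' ?_
  filter_upwards [eventually_gt_atTop x₀, hquot.eventually_ge_atTop x₀,
    hquot.eventually_gt_atTop 0] with x hx hu hquot_pos
  have hω0 : ω x ≠ 0 := fun h => by simp [h] at hquot_pos
  have hcomp : (fun y => η (y / ω y)) =ᶠ[𝓝 x] ω :=
    eventually_of_mem (Ioi_mem_nhds hx) fun y hy => heq y (le_of_lt hy)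
  exact (elasticity_eq_of_comp_div_eventuallyEq (hη_diff _ hu) (hω_diff x hx.le) hω0 hcomp).symm

theorem stmt19 (x₀ : ℝ) (hx₀ : 0 < x₀) (η ω : ℝ → ℝ)
    (hη_diff : ∀ x : ℝ, x₀ ≤ x → DifferentiableAt ℝ η x)
    (hω_diff : ∀ x : ℝ, x₀ ≤ x → DifferentiableAt ℝ ω x)
    (hη_pos : ∀ x : ℝ, x₀ ≤ x → 0 < η x)
    (hω_pos : ∀ x : ℝ, x₀ ≤ x → 0 < ω x)
    (hη_mono : MonotoneOn η (Set.Ici x₀))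
    (hη_small : Tendsto (fun x => x * deriv η x / η x) atTop (nhds 0))
    (hω_mono : ∀ x : ℝ, x₀ ≤ x → 0 ≤ deriv ω x)
    (hquot : Tendsto (fun x => x / ω x) atTop atTop)
    (heq : ∀ x : ℝ, x₀ ≤ x → η (x / ω x) = ω x) :
    Tendsto (fun x => x * deriv ω x / ω x) atTop (nhds 0) :=
  stmt19_general x₀ η ω hη_diff hω_diff hη_small hquot heq
end
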